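/- arXiv:2109.12553 — 3 statements merged into one kernel-verified Lean document; each statement's English description precedes it below -/
import Mathlib

section
/- Under the approximation x_T(t) ≡ (1-θ)N, in the infection-time coordinate ξ the undetected infected population satisfies x_I(ξ) = x_I(0) + x_S(0)(1 - e^{-(β/N)ξ}) - γξ - (1/((1-θ)N))∫₀^ξ u(η) dη. -/
/-!
Since ξ' = x_I, the susceptible equation reads x_S' = -(β/N) ξ' x_S, so x_S e^{(β/N)ξ} is constant
and x_S = x_S(0) e^{-(β/N)ξ}. Adding the two equations, the transmission terms cancel and
x_I + x_S + γ ξ + (1/((1-θ)N)) ∫₀ᵗ u x_I is a first integral; substituting x_S gives the formula.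
-/

open Real

theorem eq_of_forall_hasDerivAt_zero {f : ℝ → ℝ} (hf : ∀ x, HasDerivAt f 0 x) (x y : ℝ) :
    f x = f y :=
  is_const_of_deriv_eq_zero (fun z => (hf z).differentiableAt) (fun z => (hf z).deriv) x y

theorem hasDerivAt_integral_of_continuous {f : ℝ → ℝ} (hf : Continuous f) (x : ℝ) :
    HasDerivAt (fun y => ∫ s in (0 : ℝ)..y, f s) (f x) x :=
  (hf.integral_hasStrictDerivAt 0 x).hasDerivAt

theorem eq_mul_exp_sub_of_hasDerivAt_mul {f φ Φ : ℝ → ℝ}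
    (hf : ∀ x, HasDerivAt f (φ x * f x) x) (hΦ : ∀ x, HasDerivAt Φ (φ x) x) (x y : ℝ) :
    f x = f y * exp (Φ x - Φ y) := by
  have hconst : ∀ z, HasDerivAt (fun z => f z * exp (-Φ z)) 0 z := fun z =>
    ((hf z).fun_mul (hΦ z).neg.exp).congr_deriv (by ring)
  calc f x = f x * exp (-Φ x) * exp (Φ x) := by rw [mul_assoc, ← exp_add]; simp
    _ = f y * exp (-Φ y) * exp (Φ x) := by rw [eq_of_forall_hasDerivAt_zero hconst x y]
    _ = f y * exp (Φ x - Φ y) := by rw [sub_eq_neg_add, exp_add]; ring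

theorem sidur_infected_formula_infection_time_general
    (β γ N θ : ℝ) (xS xI u : ℝ → ℝ)
    (hu : Continuous u)
    (hxI : Continuous xI)
    (hS : ∀ t, HasDerivAt xS (-(β / N) * xS t * xI t) t)
    (hI : ∀ t, HasDerivAt xI
      ((β / N) * xS t * xI t - u t * xI t / ((1 - θ) * N) - γ * xI t) t) :
    ∀ t ≥ (0:ℝ),
      xI t = xI 0 + xS 0 * (1 - Real.exp (-(β / N) * ∫ s in (0:ℝ)..t, xI s))
        - γ * (∫ s in (0:ℝ)..t, xI s)
        - (1 / ((1 - θ) * N)) * ∫ s in (0:ℝ)..t, u s * xI s := by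
  intro t _
  set ξ : ℝ → ℝ := fun x => ∫ s in (0:ℝ)..x, xI s
  set V : ℝ → ℝ := fun x => ∫ s in (0:ℝ)..x, u s * xI s
  have hξ := hasDerivAt_integral_of_continuous hxI
  have hV := hasDerivAt_integral_of_continuous (f := fun s => u s * xI s) (hu.mul hxI)
  have hxS : xS t = xS 0 * exp (-(β / N) * ξ t) := by
    have := eq_mul_exp_sub_of_hasDerivAt_mul (φ := fun x => -(β / N) * xI x)
      (fun x => (hS x).congr_deriv (by ring)) (fun x => (hξ x).const_mul (-(β / N))) t 0
    simpa [ξ] using this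
  have hfirst : ∀ x, HasDerivAt
      (fun y => xI y + xS y + γ * ξ y + 1 / ((1 - θ) * N) * V y) 0 x := fun x => by
    refine ((((hI x).add (hS x)).add ((hξ x).const_mul γ)).add
      ((hV x).const_mul _)).congr_deriv ?_
    ring
  have := eq_of_forall_hasDerivAt_zero hfirst t 0
  simp only [ξ, V, intervalIntegral.integral_same, mul_zero, add_zero] at this hxS
  rw [hxS] at this
  linear_combination this

/-- Under the approximation x_T ≡ (1-θ)N, the undetected infected
population in the infection-time coordinate ξ(t) = ∫₀ᵗ x_I satisfies
x_I = x_I(0) + x_S(0)(1 - e^{-(β/N)ξ}) - γξ - (1/((1-θ)N))·∫₀^ξ u dη,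
where the last integral in infection time equals ∫₀ᵗ u(s) x_I(s) ds in ordinary time. -/
theorem sidur_infected_formula_infection_time
    (β γ N θ : ℝ) (xS xI u : ℝ → ℝ)
    (hβ : 0 < β) (hγ : 0 < γ) (hN : 0 < N) (hθ : θ ∈ Set.Ico (0:ℝ) 1)
    (hu : Continuous u) (hunn : ∀ t, 0 ≤ u t)
    (hxI : Continuous xI) (hxIpos : ∀ t, 0 < xI t)
    (hS : ∀ t, HasDerivAt xS (-(β / N) * xS t * xI t) t)
    (hI : ∀ t, HasDerivAt xI
      ((β / N) * xS t * xI t - u t * xI t / ((1 - θ) * N) - γ * xI t) t) :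
    ∀ t ≥ (0:ℝ),
      xI t = xI 0 + xS 0 * (1 - Real.exp (-(β / N) * ∫ s in (0:ℝ)..t, xI s))
        - γ * (∫ s in (0:ℝ)..t, xI s)
        - (1 / ((1 - θ) * N)) * ∫ s in (0:ℝ)..t, u s * xI s :=
  sidur_infected_formula_infection_time_general β γ N θ xS xI u hu hxI hS hI
end

section
/- If the testing rate satisfies u(t) > c*(t) := x_T(t)·max(0, (β(t)/N)x_S(t) - γ) for all t in an interval [t*, t₁), then the undetected infected population x_I is strictly decreasing on [t*, t₁) (assuming x_I > 0 there). -/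
theorem strictAntiOn_of_hasDerivAt_neg {D : Set ℝ} (hD : Convex ℝ D) {f f' : ℝ → ℝ}
    (hf : ∀ x ∈ D, HasDerivAt f (f' x) x) (hf' : ∀ x ∈ D, f' x < 0) : StrictAntiOn f D :=
  strictAntiOn_of_hasDerivWithinAt_neg hD
    (fun x hx ↦ (hf x hx).continuousAt.continuousWithinAt)
    (fun x hx ↦ (hf x (interior_subset hx)).hasDerivWithinAt)
    (fun x hx ↦ hf' x (interior_subset hx))

theorem sub_div_neg_of_mul_max_zero_lt {a T u : ℝ} (hT : 0 < T) (hu : T * max 0 a < u) :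
    a - u / T < 0 := by
  have hlt : max 0 a < u / T := by rwa [lt_div_iff₀ hT, mul_comm]
  linarith [le_max_right 0 a]

theorem best_threshold_strict_decrease_general
    (γ N tstar t₁ : ℝ) (β xS xI xT u : ℝ → ℝ)
    (hxT : ∀ t, 0 < xT t)
    (hxIpos : ∀ t ∈ Set.Ico tstar t₁, 0 < xI t)
    (hI : ∀ t ∈ Set.Ico tstar t₁,
      HasDerivAt xI ((β t * xS t / N - u t / xT t - γ) * xI t) t)
    (hu : ∀ t ∈ Set.Ico tstar t₁,
      u t > xT t * max 0 (β t / N * xS t - γ)) :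
    StrictAntiOn xI (Set.Ico tstar t₁) := by
  refine strictAntiOn_of_hasDerivAt_neg (convex_Ico _ _) hI fun t ht ↦ ?_
  have hrate : β t * xS t / N - u t / xT t - γ < 0 := by
    have := sub_div_neg_of_mul_max_zero_lt (hxT t) (hu t ht)
    rw [div_mul_eq_mul_div] at this
    linarith
  exact mul_neg_of_neg_of_pos hrate (hxIpos t ht)

/-- If u(t) > c*(t) = x_T(t)·max(0, (β(t)/N)x_S(t) - γ) on [t*, t₁),
then x_I is strictly decreasing on [t*, t₁). -/
theorem best_threshold_strict_decrease
    (γ N tstar t₁ : ℝ) (β xS xI xT u : ℝ → ℝ)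
    (hγ : 0 < γ) (hN : 0 < N) (htt : tstar < t₁)
    (hβnn : ∀ t, 0 ≤ β t)
    (hxT : ∀ t, 0 < xT t)
    (hxIpos : ∀ t ∈ Set.Ico tstar t₁, 0 < xI t)
    (hI : ∀ t ∈ Set.Ico tstar t₁,
      HasDerivAt xI ((β t * xS t / N - u t / xT t - γ) * xI t) t)
    (hu : ∀ t ∈ Set.Ico tstar t₁,
      u t > xT t * max 0 (β t / N * xS t - γ)) :
    StrictAntiOn xI (Set.Ico tstar t₁) :=
  best_threshold_strict_decrease_general γ N tstar t₁ β xS xI xT u hxT hxIpos hI hu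
end

section
/- The value of the first epidemic peak x_I^{p₁} = x_I(0) + x_S(0)(1 - 1/R₁) - x_S(0)·(1/R₁)·ln R₁, obtained by evaluating x_I(ξ) at ξ = (N/β)ln R₁, is a strictly decreasing function of the testing rate C (for R₁ > 1). -/
/-!
The peak equals `x_I(0) + x_S(0) g(R₁)` with `g R = 1 - 1/R - (1/R) log R`. Since
`g' R = log R / R²` is positive for `R > 1`, `g` is strictly increasing on `[1, ∞)`, while
`R₁(C) = x_S(0) β / (C/(1-θ) + γN)` is strictly decreasing in `C ≥ 0`.
-/

open Real Set

lemma hasDerivAt_one_sub_inv_sub_inv_mul_log {R : ℝ} (hR : R ≠ 0) :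
    HasDerivAt (fun R : ℝ => 1 - 1 / R - 1 / R * log R) (log R / R ^ 2) R := by
  have hinv : HasDerivAt (fun R : ℝ => 1 / R) (-(R ^ 2)⁻¹) R := by
    simpa only [one_div] using hasDerivAt_inv hR
  refine (((hasDerivAt_const R 1).fun_sub hinv).fun_sub
    (hinv.fun_mul (hasDerivAt_log hR))).congr_deriv ?_
  field_simp
  ring

lemma strictMonoOn_one_sub_inv_sub_inv_mul_log :
    StrictMonoOn (fun R : ℝ => 1 - 1 / R - 1 / R * log R) (Ici 1) := by
  have hderiv (R : ℝ) (hR : 1 ≤ R) :=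
    hasDerivAt_one_sub_inv_sub_inv_mul_log (R := R) (by positivity)
  refine strictMonoOn_of_deriv_pos (convex_Ici 1)
    (fun R hR => (hderiv R hR).continuousAt.continuousWithinAt) fun R hR => ?_
  rw [interior_Ici] at hR
  have hR₀ : 0 < R := zero_lt_one.trans hR
  rw [(hderiv R hR.out.le).deriv]
  exact div_pos (log_pos hR) (by positivity)

lemma strictAntiOn_div_div_add {a k b : ℝ} (ha : 0 < a) (hk : 0 < k) (hb : 0 < b) :
    StrictAntiOn (fun C : ℝ => a / (C / k + b)) (Ici 0) := fun C₁ hC₁ C₂ _ h =>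
  div_lt_div_of_pos_left ha (by have := hC₁.out; positivity) (by gcongr)

theorem first_peak_strictly_decreasing_in_C_general
    (xS0 xI0 β γ N θ : ℝ)
    (hS0 : 0 < xS0) (hβ : 0 < β) (hγ : 0 < γ) (hN : 0 < N)
    (hθ : θ ∈ Set.Ico (0:ℝ) 1) :
    StrictAntiOn
      (fun C => xI0 + xS0 * (1 - 1 / (xS0 * β / (C / (1 - θ) + γ * N)))
        - xS0 * (1 / (xS0 * β / (C / (1 - θ) + γ * N)))
            * Real.log (xS0 * β / (C / (1 - θ) + γ * N)))
      {C : ℝ | 0 ≤ C ∧ 1 < xS0 * β / (C / (1 - θ) + γ * N)} := by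
  have hR₁ : StrictAntiOn (fun C => xS0 * β / (C / (1 - θ) + γ * N)) (Ici 0) :=
    strictAntiOn_div_div_add (by positivity) (sub_pos.2 hθ.2) (by positivity)
  intro C₁ hC₁ C₂ hC₂ h
  have hg := strictMonoOn_one_sub_inv_sub_inv_mul_log hC₂.2.le hC₁.2.le (hR₁ hC₁.1 hC₂.1 h)
  have := mul_lt_mul_of_pos_left hg hS0
  simp only at this ⊢
  linarith

/-- The first epidemic peak value
x_I^{p₁}(C) = x_I(0) + x_S(0)(1 - 1/R₁(C)) - x_S(0)(1/R₁(C))·ln R₁(C),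
with R₁(C) = x_S(0)β/(C/(1-θ) + γN), is strictly decreasing in C
on the set of nonnegative testing rates where R₁(C) > 1. -/
theorem first_peak_strictly_decreasing_in_C
    (xS0 xI0 β γ N θ : ℝ)
    (hS0 : 0 < xS0) (hI0 : 0 < xI0) (hβ : 0 < β) (hγ : 0 < γ) (hN : 0 < N)
    (hθ : θ ∈ Set.Ico (0:ℝ) 1) :
    StrictAntiOn
      (fun C => xI0 + xS0 * (1 - 1 / (xS0 * β / (C / (1 - θ) + γ * N)))
        - xS0 * (1 / (xS0 * β / (C / (1 - θ) + γ * N)))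
            * Real.log (xS0 * β / (C / (1 - θ) + γ * N)))
      {C : ℝ | 0 ≤ C ∧ 1 < xS0 * β / (C / (1 - θ) + γ * N)} :=
  first_peak_strictly_decreasing_in_C_general xS0 xI0 β γ N θ hS0 hβ hγ hN hθ
end
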